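/- arXiv:2203.09436 — 5 statements merged into one kernel-verified Lean document; each statement's English description precedes it below -/
import Mathlib

section
/- Let (e_k)_{k≥1} be the estimation errors e_k = E[‖F̃(u_k) − F(u_k)‖²] of a sequence of estimators satisfying, for each k ≥ 1, the recursive bound e_k ≤ p_k σ²/S₁⁽ᵏ⁾ + (1 − p_k)( e_{k-1} + E[L²‖u_k − u_{k-1}‖²/S₂⁽ᵏ⁾] ) (with the convention that the k = 1 inequality reads e_1 ≤ p_1 σ²/S₁⁽¹⁾ since p_1 = 1). Fix ε > 0 and suppose p_k = 2/(k+1), S₁⁽ᵏ⁾ ≥ ⌈8σ²/(p_k ε²)⌉, and S₂⁽ᵏ⁾ ≥ ⌈8L²‖u_k − u_{k-1}‖²/(p_k² ε²)⌉ almost surely (so that E[L²‖u_k − u_{k-1}‖²/S₂⁽ᵏ⁾] ≤ p_k² ε²/8). Then E[‖F̃(u_k) − F(u_k)‖²] ≤ ε²/k for all k ≥ 1. -/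
/-!
The choice of `S₁⁽ᵏ⁾` makes the fresh-sample term `p_k σ²/S₁⁽ᵏ⁾` at most `p_k² ε²/8`, the bound
also assumed for the correction term. With `p_k = 2/(k+1)` the recursion then propagates
`e_k ≤ ε²/k` by induction, since `p² ε²/8 + (1 − p)(ε²/k + p² ε²/8)` with `p = 2/(k+2)` falls
short of `ε²/(k+1)` by `ε²(2k+3)/((k+1)(k+2)³)`.
-/

open MeasureTheory

lemma div_le_of_natCeil_div_le {a q : ℝ} {n : ℕ} (hq : 0 < q) (h : ⌈a / q⌉₊ ≤ n) :
    a / n ≤ q := by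
  rcases Nat.eq_zero_or_pos n with rfl | hn
  · simpa using hq.le
  have hdiv : a / q ≤ n := (Nat.le_ceil _).trans (by exact_mod_cast h)
  rw [div_le_iff₀ (by exact_mod_cast hn)]
  rw [div_le_iff₀ hq] at hdiv
  linarith

lemma mul_div_le_sq_of_natCeil_le {p σ ε : ℝ} {n : ℕ} (hp : 0 < p) (hε : ε ≠ 0)
    (h : ⌈8 * σ ^ 2 / (p * ε ^ 2)⌉₊ ≤ n) : p * σ ^ 2 / n ≤ p ^ 2 * ε ^ 2 / 8 := by
  have h8 : 8 * σ ^ 2 / n ≤ p * ε ^ 2 := div_le_of_natCeil_div_le (by positivity) h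
  calc p * σ ^ 2 / n = p / 8 * (8 * σ ^ 2 / n) := by ring
    _ ≤ p / 8 * (p * ε ^ 2) := by gcongr
    _ = p ^ 2 * ε ^ 2 / 8 := by ring

lemma page_step_le {k δ : ℝ} (hk : 0 < k) (hδ : 0 ≤ δ) :
    (2 / (k + 1 + 1)) ^ 2 * δ / 8 + (1 - 2 / (k + 1 + 1)) * (δ / k + (2 / (k + 1 + 1)) ^ 2 * δ / 8)
      ≤ δ / (k + 1) := by
  have hgap : δ / (k + 1) - ((2 / (k + 1 + 1)) ^ 2 * δ / 8
      + (1 - 2 / (k + 1 + 1)) * (δ / k + (2 / (k + 1 + 1)) ^ 2 * δ / 8))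
      = δ * (2 * k + 3) / ((k + 1) * (k + 1 + 1) ^ 3) := by
    field_simp
    ring
  have : 0 ≤ δ * (2 * k + 3) / ((k + 1) * (k + 1 + 1) ^ 3) := by positivity
  linarith

lemma le_div_of_page_recursion {e b c : ℕ → ℝ} {δ : ℝ} (hδ : 0 ≤ δ)
    (hb : ∀ k : ℕ, 1 ≤ k → b k ≤ (2 / ((k : ℝ) + 1)) ^ 2 * δ / 8)
    (hc : ∀ k : ℕ, 2 ≤ k → c k ≤ (2 / ((k : ℝ) + 1)) ^ 2 * δ / 8)
    (h1 : e 1 ≤ b 1)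
    (hrec : ∀ k : ℕ, 2 ≤ k → e k ≤ b k + (1 - 2 / ((k : ℝ) + 1)) * (e (k - 1) + c k)) :
    ∀ k : ℕ, 1 ≤ k → e k ≤ δ / k := by
  intro k hk
  induction k, hk using Nat.le_induction with
  | base =>
    have := hb 1 le_rfl
    norm_num at this ⊢
    linarith
  | succ k hk ih =>
    have hk0 : (0 : ℝ) < k := by exact_mod_cast hk
    have hp : (0 : ℝ) ≤ 1 - 2 / ((k : ℝ) + 1 + 1) := by
      rw [sub_nonneg, div_le_one (by positivity)]
      linarith
    have hb' := hb (k + 1) (by omega)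
    have hc' := hc (k + 1) (by omega)
    have hrec' := hrec (k + 1) (by omega)
    rw [Nat.add_sub_cancel] at hrec'
    push_cast at hb' hc' hrec' ⊢
    calc e (k + 1) ≤ b (k + 1) + (1 - 2 / ((k : ℝ) + 1 + 1)) * (e k + c (k + 1)) := hrec'
      _ ≤ (2 / ((k : ℝ) + 1 + 1)) ^ 2 * δ / 8 + (1 - 2 / ((k : ℝ) + 1 + 1))
            * (δ / k + (2 / ((k : ℝ) + 1 + 1)) ^ 2 * δ / 8) := by gcongr
      _ ≤ δ / (k + 1) := page_step_le hk0 hδ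

theorem page_variance_decay_general
    {d : ℕ} {Ω : Type*} [MeasureSpace Ω]
    (u : ℕ → Ω → EuclideanSpace ℝ (Fin d))
    (σ L ε : ℝ) (hε : 0 < ε)
    (S1 : ℕ → ℕ) (S2 : ℕ → Ω → ℕ)
    (e : ℕ → ℝ)
    (hrec1 : e 1 ≤ (2 / ((1 : ℝ) + 1)) * σ ^ 2 / S1 1)
    (hrec : ∀ k : ℕ, 2 ≤ k →
      e k ≤ (2 / ((k : ℝ) + 1)) * σ ^ 2 / S1 k
        + (1 - 2 / ((k : ℝ) + 1)) *
            (e (k - 1) + ∫ ω, L ^ 2 * ‖u k ω - u (k - 1) ω‖ ^ 2 / (S2 k ω : ℝ)))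
    (hS1 : ∀ k : ℕ, 1 ≤ k →
      (⌈8 * σ ^ 2 / ((2 / ((k : ℝ) + 1)) * ε ^ 2)⌉₊ : ℕ) ≤ S1 k)
    (hS2exp : ∀ k : ℕ, 1 ≤ k →
      (∫ ω, L ^ 2 * ‖u k ω - u (k - 1) ω‖ ^ 2 / (S2 k ω : ℝ))
        ≤ (2 / ((k : ℝ) + 1)) ^ 2 * ε ^ 2 / 8) :
    ∀ k : ℕ, 1 ≤ k → e k ≤ ε ^ 2 / k :=
  le_div_of_page_recursion (sq_nonneg ε)
    (fun k hk => mul_div_le_sq_of_natCeil_le (by positivity) hε.ne' (hS1 k hk))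
    (fun k hk => hS2exp k (by omega)) (by exact_mod_cast hrec1) hrec

/-- Under the recursive PAGE variance bound, the parameter choices
`p_k = 2/(k+1)`, `S₁⁽ᵏ⁾ ≥ ⌈8σ²/(p_k ε²)⌉` and `S₂⁽ᵏ⁾ ≥ ⌈8L²‖u_k − u_{k-1}‖²/(p_k² ε²)⌉` (a.s.)
yield `E[‖F̃(u_k) − F(u_k)‖²] ≤ ε²/k` for all `k ≥ 1`. -/
theorem page_variance_decay
    {d : ℕ} {Ω : Type*} [MeasureSpace Ω] [IsProbabilityMeasure (volume : Measure Ω)]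
    (F : EuclideanSpace ℝ (Fin d) → EuclideanSpace ℝ (Fin d))
    (u Ft : ℕ → Ω → EuclideanSpace ℝ (Fin d))
    (σ L ε : ℝ) (hσ : 0 < σ) (hL : 0 < L) (hε : 0 < ε)
    (S1 : ℕ → ℕ) (S2 : ℕ → Ω → ℕ)
    (hS1pos : ∀ k, 1 ≤ S1 k) (hS2pos : ∀ k ω, 1 ≤ S2 k ω)
    (e : ℕ → ℝ)
    (he : ∀ k, e k = ∫ ω, ‖Ft k ω - F (u k ω)‖ ^ 2)
    (hint : ∀ k, Integrable (fun ω => ‖Ft k ω - F (u k ω)‖ ^ 2))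
    (hint2 : ∀ k, 1 ≤ k →
      Integrable (fun ω => L ^ 2 * ‖u k ω - u (k - 1) ω‖ ^ 2 / (S2 k ω : ℝ)))
    (hrec1 : e 1 ≤ (2 / ((1 : ℝ) + 1)) * σ ^ 2 / S1 1)
    (hrec : ∀ k : ℕ, 2 ≤ k →
      e k ≤ (2 / ((k : ℝ) + 1)) * σ ^ 2 / S1 k
        + (1 - 2 / ((k : ℝ) + 1)) *
            (e (k - 1) + ∫ ω, L ^ 2 * ‖u k ω - u (k - 1) ω‖ ^ 2 / (S2 k ω : ℝ)))
    (hS1 : ∀ k : ℕ, 1 ≤ k →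
      (⌈8 * σ ^ 2 / ((2 / ((k : ℝ) + 1)) * ε ^ 2)⌉₊ : ℕ) ≤ S1 k)
    (hS2 : ∀ k : ℕ, 1 ≤ k → ∀ᵐ ω,
      (⌈8 * L ^ 2 * ‖u k ω - u (k - 1) ω‖ ^ 2 / ((2 / ((k : ℝ) + 1)) ^ 2 * ε ^ 2)⌉₊ : ℕ)
        ≤ S2 k ω)
    (hS2exp : ∀ k : ℕ, 1 ≤ k →
      (∫ ω, L ^ 2 * ‖u k ω - u (k - 1) ω‖ ^ 2 / (S2 k ω : ℝ))
        ≤ (2 / ((k : ℝ) + 1)) ^ 2 * ε ^ 2 / 8) :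
    ∀ k : ℕ, 1 ≤ k → e k ≤ ε ^ 2 / k :=
  page_variance_decay_general u σ L ε hε S1 S2 e hrec1 hrec hS1 hS2exp
end

section
/- Let F : ℝ^d → ℝ^d be (1/L)-cocoercive. Let (A_k)_{k≥1} and (B_k)_{k≥1} be positive non-decreasing real sequences satisfying, for all k ≥ 2, B_{k-1}/A_k = B_k/(A_k + B_k) and 1 − 2B_k/(A_k + B_k) = A_{k-1}/A_k. Fix u_0, and for k ≥ 1 let u_k = λ_k u_0 + (1 − λ_k)(u_{k-1} − (1/L) g_{k-1}), where λ_k = B_k/(A_k + B_k) and g_{k-1} ∈ ℝ^d is an arbitrary vector (an estimate of F(u_{k-1})). Define C_k = (A_k/(2L))‖F(u_k)‖² + B_k⟨F(u_k), u_k − u_0⟩. Then for every k ≥ 2, C_k − C_{k-1} ≤ (A_k/(2L))‖F(u_{k-1}) − g_{k-1}‖² + ((A_k − A_{k-1})/(2L)) ⟨F(u_{k-1}), F(u_{k-1}) − g_{k-1}⟩. -/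
open scoped RealInnerProductSpace

/-! With `λ = B_k/(A_k + B_k)`, the weight relations say
`B_{k-1} = B_k (1 - λ) = A_k λ = (A_k - A_{k-1})/2`. Under these relations the bound minus
`C_k - C_{k-1}` is exactly `(A_k/(2L))‖F u_k - 2 F u_{k-1} + g_{k-1}‖²` plus `A_k` times the
cocoercivity slack of the pair `(u_k, u_{k-1})`, and both terms are nonnegative. -/

section

variable {E : Type*} [NormedAddCommGroup E] [InnerProductSpace ℝ E]

noncomputable def halpernPotential (L a b : ℝ) (F : E → E) (u₀ u : E) : ℝ :=
  a / (2 * L) * ‖F u‖ ^ 2 + b * ⟪F u, u - u₀⟫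

theorem halpernPotential_step_slack_eq {F : E → E} {u₀ u v g : E} {L a a' b lam : ℝ}
    (hv : v = lam • u₀ + (1 - lam) • (u - (1 / L) • g))
    (hlam : 2 * a * lam = a - a') (hb : b * (1 - lam) = a * lam) :
    a / (2 * L) * ‖F u - g‖ ^ 2 + (a - a') / (2 * L) * ⟪F u, F u - g⟫
        - (halpernPotential L a b F u₀ v - halpernPotential L a' (a * lam) F u₀ u) =
      a / (2 * L) * ‖F v - (2 : ℝ) • F u + g‖ ^ 2
        + a * (⟪F v - F u, v - u⟫ - 1 / L * ‖F v - F u‖ ^ 2) := by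
  have hvu₀ : v - u₀ = (1 - lam) • (u - u₀) - ((1 - lam) / L) • g := by rw [hv]; module
  have hvu : v - u = (-lam) • (u - u₀) - ((1 - lam) / L) • g := by rw [hv]; module
  unfold halpernPotential
  rw [hvu₀, hvu]
  simp only [← real_inner_self_eq_norm_sq, inner_sub_left, inner_sub_right, inner_add_left,
    inner_add_right, real_inner_smul_left, real_inner_smul_right]
  rw [real_inner_comm (F u) (F v), real_inner_comm g (F v), real_inner_comm g (F u)]
  linear_combination (-(⟪F v, u⟫ - ⟪F v, u₀⟫ - ⟪g, F v⟫ / L)) * hb + ⟪g, F u⟫ / (2 * L) * hlam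

theorem halpernPotential_step_le {F : E → E} {u₀ u v g : E} {L a a' b lam : ℝ}
    (hL : 0 < L) (ha : 0 ≤ a) (hcoco : 1 / L * ‖F v - F u‖ ^ 2 ≤ ⟪F v - F u, v - u⟫)
    (hv : v = lam • u₀ + (1 - lam) • (u - (1 / L) • g))
    (hlam : 2 * a * lam = a - a') (hb : b * (1 - lam) = a * lam) :
    halpernPotential L a b F u₀ v - halpernPotential L a' (a * lam) F u₀ u ≤
      a / (2 * L) * ‖F u - g‖ ^ 2 + (a - a') / (2 * L) * ⟪F u, F u - g⟫ := by
  have hslack := halpernPotential_step_slack_eq (F := F) hv hlam hb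
  have hsq : 0 ≤ a / (2 * L) * ‖F v - (2 : ℝ) • F u + g‖ ^ 2 := by positivity
  have hcoco' : 0 ≤ a * (⟪F v - F u, v - u⟫ - 1 / L * ‖F v - F u‖ ^ 2) :=
    mul_nonneg ha (sub_nonneg.mpr hcoco)
  linarith

end

theorem halpern_potential_one_step_cocoercive_general
    {d : ℕ} (L : ℝ) (hL : 0 < L)
    (F : EuclideanSpace ℝ (Fin d) → EuclideanSpace ℝ (Fin d))
    (hcoco : ∀ u v, (1 / L) * ‖F u - F v‖ ^ 2 ≤ ⟪F u - F v, u - v⟫)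
    (A B : ℕ → ℝ)
    (hApos : ∀ k, 1 ≤ k → 0 < A k) (hBpos : ∀ k, 1 ≤ k → 0 < B k)
    (hAB1 : ∀ k, 2 ≤ k → B (k - 1) / A k = B k / (A k + B k))
    (hAB2 : ∀ k, 2 ≤ k → 1 - 2 * B k / (A k + B k) = A (k - 1) / A k)
    (g : ℕ → EuclideanSpace ℝ (Fin d)) (u : ℕ → EuclideanSpace ℝ (Fin d))
    (hrec : ∀ k, 1 ≤ k →
      u k = (B k / (A k + B k)) • u 0
        + (1 - B k / (A k + B k)) • (u (k - 1) - (1 / L) • g (k - 1)))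
    (C : ℕ → ℝ)
    (hC : ∀ k, C k = (A k / (2 * L)) * ‖F (u k)‖ ^ 2 + B k * ⟪F (u k), u k - u 0⟫) :
    ∀ k, 2 ≤ k →
      C k - C (k - 1) ≤
        (A k / (2 * L)) * ‖F (u (k - 1)) - g (k - 1)‖ ^ 2 +
          ((A k - A (k - 1)) / (2 * L)) * ⟪F (u (k - 1)), F (u (k - 1)) - g (k - 1)⟫ := by
  intro k hk
  have ha : 0 < A k := hApos k (by omega)
  have hab : A k + B k ≠ 0 := (add_pos ha (hBpos k (by omega))).ne'
  have hB : B (k - 1) = A k * (B k / (A k + B k)) := by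
    rw [← hAB1 k hk, mul_div_cancel₀ _ ha.ne']
  have hlam : 2 * A k * (B k / (A k + B k)) = A k - A (k - 1) := by
    have h := hAB2 k hk
    rw [eq_div_iff ha.ne'] at h
    linear_combination -h
  have hb : B k * (1 - B k / (A k + B k)) = A k * (B k / (A k + B k)) := by
    field_simp
    ring
  rw [hC k, hC (k - 1), hB]
  exact halpernPotential_step_le hL ha.le (hcoco _ _) (hrec k (by omega)) hlam hb

/-- One-step potential decrease bound for the Halpern iteration with an
inexact operator value, in the `(1/L)`-cocoercive case: with
`C_k = (A_k/(2L))‖F(u_k)‖² + B_k⟪F(u_k), u_k − u_0⟫`, for all `k ≥ 2`,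
`C_k − C_{k-1} ≤ (A_k/(2L))‖F(u_{k-1}) − g_{k-1}‖² + ((A_k − A_{k-1})/(2L))⟪F(u_{k-1}), F(u_{k-1}) − g_{k-1}⟫`. -/
theorem halpern_potential_one_step_cocoercive
    {d : ℕ} (L : ℝ) (hL : 0 < L)
    (F : EuclideanSpace ℝ (Fin d) → EuclideanSpace ℝ (Fin d))
    (hcoco : ∀ u v, (1 / L) * ‖F u - F v‖ ^ 2 ≤ ⟪F u - F v, u - v⟫)
    (A B : ℕ → ℝ)
    (hApos : ∀ k, 1 ≤ k → 0 < A k) (hBpos : ∀ k, 1 ≤ k → 0 < B k)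
    (hAmono : ∀ k, 1 ≤ k → A k ≤ A (k + 1)) (hBmono : ∀ k, 1 ≤ k → B k ≤ B (k + 1))
    (hAB1 : ∀ k, 2 ≤ k → B (k - 1) / A k = B k / (A k + B k))
    (hAB2 : ∀ k, 2 ≤ k → 1 - 2 * B k / (A k + B k) = A (k - 1) / A k)
    (g : ℕ → EuclideanSpace ℝ (Fin d)) (u : ℕ → EuclideanSpace ℝ (Fin d))
    (hrec : ∀ k, 1 ≤ k →
      u k = (B k / (A k + B k)) • u 0
        + (1 - B k / (A k + B k)) • (u (k - 1) - (1 / L) • g (k - 1)))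
    (C : ℕ → ℝ)
    (hC : ∀ k, C k = (A k / (2 * L)) * ‖F (u k)‖ ^ 2 + B k * ⟪F (u k), u k - u 0⟫) :
    ∀ k, 2 ≤ k →
      C k - C (k - 1) ≤
        (A k / (2 * L)) * ‖F (u (k - 1)) - g (k - 1)‖ ^ 2 +
          ((A k - A (k - 1)) / (2 * L)) * ⟪F (u (k - 1)), F (u (k - 1)) - g (k - 1)⟫ :=
  halpern_potential_one_step_cocoercive_general L hL F hcoco A B hApos hBpos hAB1 hAB2 g u hrec C hC
end

section
/- Let U ⊆ ℝ^d be nonempty, closed, and convex, with metric projection Π_U, and let F : ℝ^d → ℝ^d be (1/L)-cocoercive. For η ≥ L define the operator mapping G_η(u) = η(u − Π_U(u − F(u)/η)). Then G_η is (3/(4η))-cocoercive: for all u, v ∈ ℝ^d, ⟨G_η(u) − G_η(v), u − v⟩ ≥ (3/(4η)) ‖G_η(u) − G_η(v)‖². -/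
open scoped RealInnerProductSpace

/-!
A nearest-point map onto a convex set is firmly nonexpansive (1-cocoercive), by adding the
variational inequalities at two points. For a firmly nonexpansive `T` and a `c`-cocoercive `F`,
the residual `R u = u - T (u - c F u)` satisfies, with `g = R u - R v`, `f = F u - F v`,
`⟪g, u - v⟫ ≥ ‖g‖² + c ⟪f, u - v⟫ - c ⟪g, f⟫ ≥ ‖g‖² + c² ‖f‖² - c ‖g‖ ‖f‖ ≥ ¾ ‖g‖²`,
the last step being `(c ‖f‖ - ‖g‖ / 2)² ≥ 0`. Scaling by `η = 1 / c` gives the theorem.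
-/

section Cocoercive

variable {E : Type*} [NormedAddCommGroup E] [InnerProductSpace ℝ E]

def IsCocoercive (γ : ℝ) (F : E → E) : Prop :=
  ∀ u v, γ * ‖F u - F v‖ ^ 2 ≤ ⟪F u - F v, u - v⟫

theorem IsCocoercive.mono {γ γ' : ℝ} {F : E → E} (hF : IsCocoercive γ F) (h : γ' ≤ γ) :
    IsCocoercive γ' F := fun u v =>
  (mul_le_mul_of_nonneg_right h (sq_nonneg _)).trans (hF u v)

theorem IsCocoercive.smul {γ η : ℝ} {F : E → E} (hF : IsCocoercive γ F) (hη : 0 < η) :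
    IsCocoercive (γ / η) (fun u => η • F u) := by
  intro u v
  rw [← smul_sub, norm_smul, Real.norm_eq_abs, abs_of_pos hη, real_inner_smul_left]
  calc γ / η * (η * ‖F u - F v‖) ^ 2 = η * (γ * ‖F u - F v‖ ^ 2) := by
        field_simp
    _ ≤ η * ⟪F u - F v, u - v⟫ := mul_le_mul_of_nonneg_left (hF u v) hη.le

theorem real_inner_sub_le_zero_of_forall_norm_sub_le {K : Set E} (hK : Convex ℝ K) {x p : E}
    (hp : p ∈ K) (hmin : ∀ y ∈ K, ‖x - p‖ ≤ ‖x - y‖) : ∀ z ∈ K, ⟪x - p, z - p⟫ ≤ 0 := by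
  have : Nonempty K := ⟨⟨p, hp⟩⟩
  refine (norm_eq_iInf_iff_real_inner_le_zero hK hp).mp (le_antisymm ?_ ?_)
  · exact le_ciInf fun y => hmin y y.2
  · exact ciInf_le ⟨0, by rintro _ ⟨y, rfl⟩; positivity⟩ (⟨p, hp⟩ : K)

theorem norm_sub_sq_le_real_inner_of_real_inner_le_zero {x y p q : E}
    (hp : ⟪x - p, q - p⟫ ≤ 0) (hq : ⟪y - q, p - q⟫ ≤ 0) : ‖p - q‖ ^ 2 ≤ ⟪p - q, x - y⟫ := by
  have hsum : ⟪x - p, q - p⟫ + ⟪y - q, p - q⟫ = ‖p - q‖ ^ 2 - ⟪p - q, x - y⟫ := by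
    rw [← neg_sub p q, inner_neg_right, neg_add_eq_sub, ← inner_sub_left,
      ← real_inner_self_eq_norm_sq, ← inner_sub_right, real_inner_comm]
    congr 1
    abel
  linarith

theorem isCocoercive_one_of_forall_norm_sub_le {K : Set E} (hK : Convex ℝ K) {P : E → E}
    (hP : ∀ x, P x ∈ K ∧ ∀ y ∈ K, ‖x - P x‖ ≤ ‖x - y‖) : IsCocoercive 1 P := by
  intro x y
  have hvi x := real_inner_sub_le_zero_of_forall_norm_sub_le hK (hP x).1 (hP x).2
  rw [one_mul]
  exact norm_sub_sq_le_real_inner_of_real_inner_le_zero (hvi x _ (hP y).1) (hvi y _ (hP x).1)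

theorem three_quarters_mul_norm_sq_le_real_inner {w g f : E} {c : ℝ} (hc : 0 ≤ c)
    (hfirm : ‖w - g‖ ^ 2 ≤ ⟪w - g, w - c • f⟫) (hf : c * ‖f‖ ^ 2 ≤ ⟪f, w⟫) :
    3 / 4 * ‖g‖ ^ 2 ≤ ⟪g, w⟫ := by
  rw [norm_sub_sq_real, inner_sub_left, inner_sub_right, inner_sub_right,
    real_inner_self_eq_norm_sq, real_inner_smul_right, real_inner_smul_right,
    real_inner_comm g w, real_inner_comm f w] at hfirm
  have hcs : c * ⟪g, f⟫ ≤ c * (‖g‖ * ‖f‖) := mul_le_mul_of_nonneg_left (real_inner_le_norm g f) hc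
  have hcf : c * (c * ‖f‖ ^ 2) ≤ c * ⟪f, w⟫ := mul_le_mul_of_nonneg_left hf hc
  nlinarith [sq_nonneg (c * ‖f‖ - ‖g‖ / 2)]

theorem IsCocoercive.residual {c : ℝ} {T F : E → E} (hT : IsCocoercive 1 T)
    (hF : IsCocoercive c F) (hc : 0 ≤ c) : IsCocoercive (3 / 4) (fun u => u - T (u - c • F u)) := by
  intro u v
  refine three_quarters_mul_norm_sq_le_real_inner hc ?_ (hF u v)
  have hTg : (u - v) - ((u - T (u - c • F u)) - (v - T (v - c • F v)))
      = T (u - c • F u) - T (v - c • F v) := by abel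
  have hTx : (u - v) - c • (F u - F v) = (u - c • F u) - (v - c • F v) := by
    rw [smul_sub]; abel
  simpa only [hTg, hTx, one_mul] using hT (u - c • F u) (v - c • F v)

end Cocoercive

theorem operator_mapping_cocoercive_general
    {d : ℕ} (U : Set (EuclideanSpace ℝ (Fin d)))
    (hUconv : Convex ℝ U)
    (proj : EuclideanSpace ℝ (Fin d) → EuclideanSpace ℝ (Fin d))
    (hproj : ∀ x, proj x ∈ U ∧ ∀ y ∈ U, ‖x - proj x‖ ≤ ‖x - y‖)
    (L : ℝ) (hL : 0 < L)
    (F : EuclideanSpace ℝ (Fin d) → EuclideanSpace ℝ (Fin d))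
    (hcoco : ∀ u v, (1 / L) * ‖F u - F v‖ ^ 2 ≤ ⟪F u - F v, u - v⟫)
    (η : ℝ) (hη : L ≤ η) :
    ∀ u v,
      (3 / (4 * η)) * ‖(η • (u - proj (u - (1 / η) • F u))) - (η • (v - proj (v - (1 / η) • F v)))‖ ^ 2
        ≤ ⟪(η • (u - proj (u - (1 / η) • F u))) - (η • (v - proj (v - (1 / η) • F v))), u - v⟫ := by
  have hη0 : 0 < η := hL.trans_le hη
  have hF : IsCocoercive (1 / η) F :=
    IsCocoercive.mono hcoco (one_div_le_one_div_of_le hL hη)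
  have hG := ((isCocoercive_one_of_forall_norm_sub_le hUconv hproj).residual hF
    (by positivity)).smul hη0
  rwa [div_div] at hG

/-- If `F` is `(1/L)`-cocoercive and `η ≥ L`, the operator mapping
`G_η(u) = η (u − Π_U(u − F(u)/η))` associated with the metric projection `Π_U` onto a nonempty
closed convex set `U` is `(3/(4η))`-cocoercive. -/
theorem operator_mapping_cocoercive
    {d : ℕ} (U : Set (EuclideanSpace ℝ (Fin d)))
    (hUne : U.Nonempty) (hUclosed : IsClosed U) (hUconv : Convex ℝ U)
    (proj : EuclideanSpace ℝ (Fin d) → EuclideanSpace ℝ (Fin d))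
    (hproj : ∀ x, proj x ∈ U ∧ ∀ y ∈ U, ‖x - proj x‖ ≤ ‖x - y‖)
    (L : ℝ) (hL : 0 < L)
    (F : EuclideanSpace ℝ (Fin d) → EuclideanSpace ℝ (Fin d))
    (hcoco : ∀ u v, (1 / L) * ‖F u - F v‖ ^ 2 ≤ ⟪F u - F v, u - v⟫)
    (η : ℝ) (hη : L ≤ η) :
    ∀ u v,
      (3 / (4 * η)) * ‖(η • (u - proj (u - (1 / η) • F u))) - (η • (v - proj (v - (1 / η) • F v)))‖ ^ 2
        ≤ ⟪(η • (u - proj (u - (1 / η) • F u))) - (η • (v - proj (v - (1 / η) • F v))), u - v⟫ :=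
  operator_mapping_cocoercive_general U hUconv proj hproj L hL F hcoco η hη
end

section
/- Let U ⊆ ℝ^d be nonempty, closed, and convex with projection Π_U, let F : ℝ^d → ℝ^d be (1/L)-cocoercive, and define G(u) = L(u − Π_U(u − F(u)/L)). Let (A_k)_{k≥1}, (B_k)_{k≥1} be positive non-decreasing sequences satisfying, for all k ≥ 2, B_{k-1}/A_k = B_k/(A_k+B_k) and 1 − 2B_k/(A_k+B_k) = A_{k-1}/A_k. Fix u_0 and for k ≥ 1 let u_k = λ_k u_0 + (1 − λ_k)(u_{k-1} − g̃_{k-1}/L), where λ_k = B_k/(A_k+B_k) and g̃_{k-1} = L(u_{k-1} − Π_U(u_{k-1} − h_{k-1}/L)) for an arbitrary vector h_{k-1} ∈ ℝ^d (the stochastic operator mapping built from an estimate of F(u_{k-1})). Define C_k = (A_k/(2L))‖G(u_k)‖² + B_k⟨G(u_k), u_k − u_0⟩. Then for every k ≥ 2, C_k − C_{k-1} ≤ (A_k/L)‖G(u_{k-1}) − g̃_{k-1}‖² + ((A_k − A_{k-1})/(2L)) ⟨G(u_{k-1}), G(u_{k-1}) − g̃_{k-1}⟩. -/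
open scoped RealInnerProductSpace

/-!
The operator mapping `G` is `3/(4L)`-cocoercive, by firm nonexpansiveness of the projection
combined with the cocoercivity of `F`. Along the Halpern step,
`A_k (u_k - u_{k-1}) = -B_k (u_k - u_0) - (A_k / L) g̃_{k-1}` and
`B_k (u_k - u_0) = B_{k-1} (u_{k-1} - u_0 - g̃_{k-1} / L)`. Hence `A_k` times the cocoercivity
inequality between `u_k` and `u_{k-1}` bounds `C_k - C_{k-1}` by a quadratic expression in
`G(u_k) - G(u_{k-1})`, `G(u_{k-1})` and `g̃_{k-1}`, and Young's inequality
`⟪a, δ⟫ ≤ ‖a‖² + ‖δ‖² / 4` with `a = G(u_{k-1}) - g̃_{k-1}`, `δ = G(u_k) - G(u_{k-1})` finishes.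
-/

variable {E : Type*} [NormedAddCommGroup E] [InnerProductSpace ℝ E]

def IsNearestPointMap (U : Set E) (proj : E → E) : Prop :=
  ∀ x, proj x ∈ U ∧ ∀ y ∈ U, ‖x - proj x‖ ≤ ‖x - y‖

/-- Applied with `D = x - y`, `e = (F x - F y) / L` and `P` the difference of the projections of
`x - F x / L` and `y - F y / L`: `hP` is firm nonexpansiveness of the projection, `he` is
cocoercivity of `F`, and `D - P` is the operator mapping scaled by `1 / L`. -/
theorem three_quarters_norm_sq_le_real_inner (D P e : E) (hP : ‖P‖ ^ 2 ≤ ⟪P, D - e⟫)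
    (he : ‖e‖ ^ 2 ≤ ⟪e, D⟫) : (3 / 4) * ‖D - P‖ ^ 2 ≤ ⟪D - P, D⟫ := by
  have hsq : 0 ≤ ‖e - (1 / 2 : ℝ) • (D - P)‖ ^ 2 := by positivity
  simp only [← real_inner_self_eq_norm_sq, inner_sub_left, inner_sub_right,
    real_inner_smul_right, real_inner_comm] at *
  linear_combination hP + he + hsq

namespace IsNearestPointMap

variable {U : Set E} {proj : E → E}

theorem real_inner_sub_le_zero (hU : Convex ℝ U) (hproj : IsNearestPointMap U proj)
    (x : E) {y : E} (hy : y ∈ U) : ⟪x - proj x, y - proj x⟫ ≤ 0 := by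
  have : Nonempty U := ⟨⟨y, hy⟩⟩
  refine (norm_eq_iInf_iff_real_inner_le_zero hU (hproj x).1).1 ?_ y hy
  exact le_antisymm (le_ciInf fun w => (hproj x).2 w w.2)
    (ciInf_le (f := fun w : U => ‖x - w‖) ⟨0, by rintro _ ⟨w, rfl⟩; exact norm_nonneg _⟩
      ⟨proj x, (hproj x).1⟩)

theorem norm_sub_sq_le_real_inner (hU : Convex ℝ U) (hproj : IsNearestPointMap U proj)
    (x y : E) : ‖proj x - proj y‖ ^ 2 ≤ ⟪proj x - proj y, x - y⟫ := by
  have hx := hproj.real_inner_sub_le_zero hU x (hproj y).1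
  have hy := hproj.real_inner_sub_le_zero hU y (hproj x).1
  have hsum : ⟪proj x - proj y, x - y⟫ - ‖proj x - proj y‖ ^ 2
      = -⟪x - proj x, proj y - proj x⟫ - ⟪y - proj y, proj x - proj y⟫ := by
    rw [← real_inner_self_eq_norm_sq]
    simp only [inner_sub_left, inner_sub_right, real_inner_comm]
    ring
  linarith

theorem isCocoercive_operatorMapping (hU : Convex ℝ U) (hproj : IsNearestPointMap U proj)
    {L : ℝ} (hL : 0 < L) {F : E → E} (hF : IsCocoercive (1 / L) F) {G : E → E}
    (hG : ∀ x, G x = L • (x - proj (x - (1 / L) • F x))) :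
    IsCocoercive (3 / (4 * L)) G := by
  intro x y
  set p := proj (x - (1 / L) • F x)
  set q := proj (y - (1 / L) • F y)
  have hP : ‖p - q‖ ^ 2 ≤ ⟪p - q, x - y - (1 / L) • (F x - F y)⟫ := by
    convert hproj.norm_sub_sq_le_real_inner hU (x - (1 / L) • F x) (y - (1 / L) • F y) using 2
    module
  have he : ‖(1 / L) • (F x - F y)‖ ^ 2 ≤ ⟪(1 / L) • (F x - F y), x - y⟫ := by
    have hL' : 0 < 1 / L := one_div_pos.2 hL
    rw [norm_smul, mul_pow, real_inner_smul_left, Real.norm_eq_abs, abs_of_pos hL', sq (1 / L),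
      mul_assoc]
    exact mul_le_mul_of_nonneg_left (hF x y) hL'.le
  have hGxy : G x - G y = L • (x - y - (p - q)) := by
    rw [hG, hG]
    module
  rw [hGxy, norm_smul, real_inner_smul_left, Real.norm_eq_abs, abs_of_pos hL, mul_pow]
  calc 3 / (4 * L) * (L ^ 2 * ‖x - y - (p - q)‖ ^ 2) = L * (3 / 4 * ‖x - y - (p - q)‖ ^ 2) := by
        field_simp
    _ ≤ L * ⟪x - y - (p - q), x - y⟫ :=
        mul_le_mul_of_nonneg_left (three_quarters_norm_sq_le_real_inner _ _ _ hP he) hL.le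

end IsNearestPointMap

/-- Read `g, g', t, u, v, w` as `G(u_k), G(u_{k-1}), g̃_{k-1}, u_k, u_{k-1}, u_0`,
`a, a', b, b'` as `A_k, A_{k-1}, B_k, B_{k-1}` and `l` as `B_k / (A_k + B_k)`. -/
theorem halpern_potential_sub_le {g g' t v w u : E} {a a' b b' l L : ℝ} (ha : 0 ≤ a) (hL : 0 ≤ L)
    (hb' : b' = a * l) (ha' : a' = a * (1 - 2 * l)) (hb : b * (1 - l) = a * l)
    (hu : u = l • w + (1 - l) • (v - (1 / L) • t))
    (hg : (3 / (4 * L)) * ‖g - g'‖ ^ 2 ≤ ⟪g - g', u - v⟫) :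
    (a / (2 * L)) * ‖g‖ ^ 2 + b * ⟪g, u - w⟫ - ((a' / (2 * L)) * ‖g'‖ ^ 2 + b' * ⟪g', v - w⟫)
      ≤ (a / L) * ‖g' - t‖ ^ 2 + ((a - a') / (2 * L)) * ⟪g', g' - t⟫ := by
  have hbu : b • (u - w) = b' • (v - w - (1 / L) • t) := by
    rw [hu, hb']
    linear_combination (norm := module) hb • (v - w - (1 / L) • t)
  have hau : a • (u - v) = -(b • (u - w)) - (a / L) • t := by
    rw [hu]
    linear_combination (norm := module) hb • (v - w - (1 / L) • t)
  have hcoco : a * ((3 / (4 * L)) * ‖g - g'‖ ^ 2) ≤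
      -(b * ⟪g, u - w⟫) + b' * ⟪g', v - w - (1 / L) • t⟫ - (a / L) * ⟪g - g', t⟫ :=
    calc a * ((3 / (4 * L)) * ‖g - g'‖ ^ 2) ≤ ⟪g - g', a • (u - v)⟫ := by
          rw [real_inner_smul_right]; exact mul_le_mul_of_nonneg_left hg ha
      _ = ⟪g - g', -(b • (u - w)) - (a / L) • t⟫ := by rw [hau]
      _ = -(b * ⟪g, u - w⟫) + ⟪g', b • (u - w)⟫ - (a / L) * ⟪g - g', t⟫ := by
          simp only [inner_sub_right, inner_neg_right, inner_sub_left, real_inner_smul_right]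
          ring
      _ = _ := by rw [hbu, real_inner_smul_right]
  have hyoung : 0 ≤ (a / L) * ‖(g' - t) - (1 / 2 : ℝ) • (g - g')‖ ^ 2 :=
    mul_nonneg (div_nonneg ha hL) (sq_nonneg _)
  subst hb' ha'
  simp only [← real_inner_self_eq_norm_sq, inner_sub_left, inner_sub_right,
    real_inner_smul_right, real_inner_comm] at *
  linear_combination hcoco + hyoung

theorem halpern_potential_one_step_constrained_general
    {d : ℕ} (U : Set (EuclideanSpace ℝ (Fin d)))
    (hUconv : Convex ℝ U)
    (proj : EuclideanSpace ℝ (Fin d) → EuclideanSpace ℝ (Fin d))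
    (hproj : ∀ x, proj x ∈ U ∧ ∀ y ∈ U, ‖x - proj x‖ ≤ ‖x - y‖)
    (L : ℝ) (hL : 0 < L)
    (F : EuclideanSpace ℝ (Fin d) → EuclideanSpace ℝ (Fin d))
    (hcoco : ∀ u v, (1 / L) * ‖F u - F v‖ ^ 2 ≤ ⟪F u - F v, u - v⟫)
    (G : EuclideanSpace ℝ (Fin d) → EuclideanSpace ℝ (Fin d))
    (hG : ∀ x, G x = L • (x - proj (x - (1 / L) • F x)))
    (A B : ℕ → ℝ)
    (hApos : ∀ k, 1 ≤ k → 0 < A k) (hBpos : ∀ k, 1 ≤ k → 0 < B k)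
    (hAB1 : ∀ k, 2 ≤ k → B (k - 1) / A k = B k / (A k + B k))
    (hAB2 : ∀ k, 2 ≤ k → 1 - 2 * B k / (A k + B k) = A (k - 1) / A k)
    (gt u_ : ℕ → EuclideanSpace ℝ (Fin d))
    (hrec : ∀ k, 1 ≤ k →
      u_ k = (B k / (A k + B k)) • u_ 0
        + (1 - B k / (A k + B k)) • (u_ (k - 1) - (1 / L) • gt (k - 1)))
    (C : ℕ → ℝ)
    (hC : ∀ k, C k = (A k / (2 * L)) * ‖G (u_ k)‖ ^ 2 + B k * ⟪G (u_ k), u_ k - u_ 0⟫) :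
    ∀ k, 2 ≤ k →
      C k - C (k - 1) ≤
        (A k / L) * ‖G (u_ (k - 1)) - gt (k - 1)‖ ^ 2 +
          ((A k - A (k - 1)) / (2 * L)) * ⟪G (u_ (k - 1)), G (u_ (k - 1)) - gt (k - 1)⟫ := by
  intro k hk
  have hA : 0 < A k := hApos k (by omega)
  have hAB : A k + B k ≠ 0 := (add_pos hA (hBpos k (by omega))).ne'
  rw [hC k, hC (k - 1)]
  refine halpern_potential_sub_le hA.le hL.le ?_ ?_ ?_ (hrec k (by omega))
    (IsNearestPointMap.isCocoercive_operatorMapping hUconv hproj hL hcoco hG _ _)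
  · rw [← hAB1 k hk]
    field_simp
  · rw [← mul_div_assoc, hAB2 k hk]
    field_simp
  · field_simp
    ring

/-- One-step potential decrease bound for the constrained Halpern iteration
built from the operator mapping `G(u) = L(u − Π_U(u − F(u)/L))` of a `(1/L)`-cocoercive `F`,
with inexact operator mapping `g̃_{k-1} = L(u_{k-1} − Π_U(u_{k-1} − h_{k-1}/L))`. -/
theorem halpern_potential_one_step_constrained
    {d : ℕ} (U : Set (EuclideanSpace ℝ (Fin d)))
    (hUne : U.Nonempty) (hUclosed : IsClosed U) (hUconv : Convex ℝ U)
    (proj : EuclideanSpace ℝ (Fin d) → EuclideanSpace ℝ (Fin d))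
    (hproj : ∀ x, proj x ∈ U ∧ ∀ y ∈ U, ‖x - proj x‖ ≤ ‖x - y‖)
    (L : ℝ) (hL : 0 < L)
    (F : EuclideanSpace ℝ (Fin d) → EuclideanSpace ℝ (Fin d))
    (hcoco : ∀ u v, (1 / L) * ‖F u - F v‖ ^ 2 ≤ ⟪F u - F v, u - v⟫)
    (G : EuclideanSpace ℝ (Fin d) → EuclideanSpace ℝ (Fin d))
    (hG : ∀ x, G x = L • (x - proj (x - (1 / L) • F x)))
    (A B : ℕ → ℝ)
    (hApos : ∀ k, 1 ≤ k → 0 < A k) (hBpos : ∀ k, 1 ≤ k → 0 < B k)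
    (hAmono : ∀ k, 1 ≤ k → A k ≤ A (k + 1)) (hBmono : ∀ k, 1 ≤ k → B k ≤ B (k + 1))
    (hAB1 : ∀ k, 2 ≤ k → B (k - 1) / A k = B k / (A k + B k))
    (hAB2 : ∀ k, 2 ≤ k → 1 - 2 * B k / (A k + B k) = A (k - 1) / A k)
    (h gt u_ : ℕ → EuclideanSpace ℝ (Fin d))
    (hgt : ∀ k, gt k = L • (u_ k - proj (u_ k - (1 / L) • h k)))
    (hrec : ∀ k, 1 ≤ k →
      u_ k = (B k / (A k + B k)) • u_ 0
        + (1 - B k / (A k + B k)) • (u_ (k - 1) - (1 / L) • gt (k - 1)))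
    (C : ℕ → ℝ)
    (hC : ∀ k, C k = (A k / (2 * L)) * ‖G (u_ k)‖ ^ 2 + B k * ⟪G (u_ k), u_ k - u_ 0⟫) :
    ∀ k, 2 ≤ k →
      C k - C (k - 1) ≤
        (A k / L) * ‖G (u_ (k - 1)) - gt (k - 1)‖ ^ 2 +
          ((A k - A (k - 1)) / (2 * L)) * ⟪G (u_ (k - 1)), G (u_ (k - 1)) - gt (k - 1)⟫ :=
  halpern_potential_one_step_constrained_general U hUconv proj hproj L hL F hcoco G hG A B hApos
    hBpos hAB1 hAB2 gt u_ hrec C hC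
end

section
/- Let F : ℝ^d → ℝ^d be monotone and L-Lipschitz, let θ > 0 and M = 3L²(2 + θ). Let λ_k ∈ [0,1), η_k > 0, and positive parameters A_k, B_k, c_k satisfy B_{k+1} = B_k/(1 − λ_k), A_k = B_k η_k/(2λ_k), η_{k+1} = ((1 − λ_k² − Mη_k²) λ_{k+1} η_k)/((1 − Mη_k²)(1 − λ_k) λ_k) > 0, Mη_k² + λ_k² < 1, and η_{k+1} ≤ λ_{k+1}(1 − λ_k)/(M λ_k η_k). Fix u_0 and arbitrary vectors g_{k-1}, g_k ∈ ℝ^d (estimates of F(v_{k-1}), F(v_k)), and define v_k = λ_k u_0 + (1 − λ_k) u_k − η_k g_{k-1} and u_{k+1} = λ_k u_0 + (1 − λ_k) u_k − η_k g_k. With V_k = A_k‖F(u_k)‖² + B_k⟨F(u_k), u_k − u_0⟩ + c_k L²‖u_k − v_{k-1}‖², one has V_{k+1} − V_k ≤ −L²(θ A_k/(M η_k²) − c_{k+1}) ‖u_{k+1} − v_k‖² − L²(c_k − A_k) ‖u_k − v_{k-1}‖² + (2A_k/(M η_k²)) ‖F(v_k) − g_k‖² + A_k ‖F(v_{k-1})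 − g_{k-1}‖². -/
/-!
Monotonicity of `F` at the pair `(u_{k+1}, u_k)` absorbs the inner-product part of the potential,
thanks to `B_{k+1} = B_k / (1 - λ_k)` and `A_k = B_k η_k / (2 λ_k)`. What is left is a quadratic
form in `F(u_{k+1})`, `F(u_k)`, `g_k`, `g_{k-1}`. The weighted triangle inequality together with
Lipschitz continuity at `(u_{k+1}, v_k)` and `(u_k, v_{k-1})` produces the error terms
`‖F(v_k) - g_k‖²`, `‖F(v_{k-1}) - g_{k-1}‖²`. Since `u_{k+1} - v_k = η_k (g_{k-1} - g_k)` and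
`M = 3 L² (2 + θ)`, the leftover `-A_k ‖g_k - g_{k-1}‖² / 3` is the `θ`-term of the bound, and the
update rule for `η_{k+1}` makes the remaining form in `(F(u_{k+1}), g_k)` a negative perfect square.
-/

open scoped RealInnerProductSpace

theorem norm_sub_sq_le_weighted {E : Type*} [SeminormedAddCommGroup E] {t : ℝ} (ht : 0 < t)
    (x y z : E) : ‖x - z‖ ^ 2 ≤ (1 + t) * ‖x - y‖ ^ 2 + (1 + t⁻¹) * ‖y - z‖ ^ 2 :=
  calc ‖x - z‖ ^ 2 ≤ (‖x - y‖ + ‖y - z‖) ^ 2 :=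
        pow_le_pow_left₀ (norm_nonneg _) (norm_sub_le_norm_sub_add_norm_sub x y z) 2
    _ ≤ _ := by linear_combination two_mul_le_add_mul_sq (a := ‖x - y‖) (b := ‖y - z‖) ht

section InnerProductSpace

variable {E : Type*} [NormedAddCommGroup E] [InnerProductSpace ℝ E]

/-- The coefficient of `‖a‖²` is the largest one for which the difference of the two sides is
a square: it equals `‖(1 - m)(1 - λ) g - (1 - λ - m) a‖² / (m (1 - m) (1 - λ)²)`. -/
theorem quadratic_le_norm_sub_sq_div {m lam : ℝ} (hm : 0 < m) (hm1 : m < 1) (hlam : lam < 1)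
    (a g : E) :
    (1 - lam ^ 2 - m) / ((1 - m) * (1 - lam) ^ 2) * ‖a‖ ^ 2 - 2 / (1 - lam) * ⟪a, g⟫ + ‖g‖ ^ 2
      ≤ ‖a - g‖ ^ 2 / m := by
  have hm1' : 0 < 1 - m := by linarith
  have hlam' : 0 < 1 - lam := by linarith
  have hsq : 0 ≤ ‖((1 - m) * (1 - lam)) • g - (1 - lam - m) • a‖ ^ 2
      / (m * (1 - m) * (1 - lam) ^ 2) := by positivity
  rw [norm_sub_sq_real, norm_smul, norm_smul, mul_pow, mul_pow, Real.norm_eq_abs,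
    Real.norm_eq_abs, sq_abs, sq_abs, real_inner_smul_left, real_inner_smul_right,
    real_inner_comm] at hsq
  rw [norm_sub_sq_real]
  refine sub_nonneg.1 (hsq.trans_eq ?_)
  field_simp
  ring

theorem inner_halpern_step_le_of_monotone {F : E → E}
    (hmono : ∀ u v, 0 ≤ ⟪F u - F v, u - v⟫) {lam eta B : ℝ} (hlam : 0 < lam) (hlam1 : lam < 1)
    (hB : 0 ≤ B) {u0 u g u' : E} (hu' : u' = lam • u0 + (1 - lam) • u - eta • g) :
    B / (1 - lam) * ⟪F u', u' - u0⟫ - B * ⟪F u, u - u0⟫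
      ≤ B * eta / lam * (⟪F u, g⟫ - ⟪F u', g⟫ / (1 - lam)) := by
  have h := hmono u' u
  have hlam1' : 1 - lam ≠ 0 := by linarith
  rw [show u' - u = lam • (u0 - u) - eta • g by rw [hu']; module, inner_sub_right,
    real_inner_smul_right, real_inner_smul_right, inner_sub_left, inner_sub_left] at h
  rw [show u' - u0 = (1 - lam) • (u - u0) - eta • g by rw [hu']; module, inner_sub_right,
    real_inner_smul_right, real_inner_smul_right, ← neg_sub u0 u, inner_neg_right,
    inner_neg_right]
  linear_combination (norm := skip) (B / lam) * h
  exact le_of_eq (by field_simp; ring)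

end InnerProductSpace

theorem extrapolated_halpern_potential_one_step_general
    {d : ℕ} (L θ M : ℝ) (hL : 0 < L) (hθ : 0 < θ) (hM : M = 3 * L ^ 2 * (2 + θ))
    (F : EuclideanSpace ℝ (Fin d) → EuclideanSpace ℝ (Fin d))
    (hmono : ∀ u v, 0 ≤ ⟪F u - F v, u - v⟫)
    (hlip : ∀ u v, ‖F u - F v‖ ≤ L * ‖u - v‖)
    (lamk lamk1 etak etak1 Ak Ak1 Bk Bk1 ck ck1 : ℝ)
    (hlamk' : lamk < 1)
    (hetak : 0 < etak)
    (hAk : 0 < Ak) (hAk1 : 0 < Ak1) (hBk : 0 < Bk)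
    (hB : Bk1 = Bk / (1 - lamk))
    (hA : Ak = Bk * etak / (2 * lamk))
    (hA1 : Ak1 = Bk1 * etak1 / (2 * lamk1))
    (heta : etak1 = ((1 - lamk ^ 2 - M * etak ^ 2) * lamk1 * etak) /
        ((1 - M * etak ^ 2) * (1 - lamk) * lamk))
    (hsmall : M * etak ^ 2 + lamk ^ 2 < 1)
    (u0 uk vkm1 gkm1 gk vk uk1 : EuclideanSpace ℝ (Fin d))
    (hvk : vk = lamk • u0 + (1 - lamk) • uk - etak • gkm1)
    (huk1 : uk1 = lamk • u0 + (1 - lamk) • uk - etak • gk) :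
    (Ak1 * ‖F uk1‖ ^ 2 + Bk1 * ⟪F uk1, uk1 - u0⟫ + ck1 * L ^ 2 * ‖uk1 - vk‖ ^ 2)
        - (Ak * ‖F uk‖ ^ 2 + Bk * ⟪F uk, uk - u0⟫ + ck * L ^ 2 * ‖uk - vkm1‖ ^ 2)
      ≤ - (L ^ 2 * (θ * Ak / (M * etak ^ 2) - ck1)) * ‖uk1 - vk‖ ^ 2
        - (L ^ 2 * (ck - Ak)) * ‖uk - vkm1‖ ^ 2
        + (2 * Ak / (M * etak ^ 2)) * ‖F vk - gk‖ ^ 2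
        + Ak * ‖F vkm1 - gkm1‖ ^ 2 := by
  -- `λ_k ≤ 0` resp. `λ_{k+1} = 0` would make `A_k ≤ 0` resp. `A_{k+1} = 0` (as `x / 0 = 0`).
  have hlam : 0 < lamk := by
    linarith [(div_pos_iff_of_pos_left (by positivity)).1 (hA ▸ hAk)]
  have hlam1 : lamk1 ≠ 0 := by
    rintro rfl
    simp only [mul_zero, div_zero] at hA1
    linarith
  have hm0 : 0 < M * etak ^ 2 := by rw [hM]; positivity
  have hm1 : M * etak ^ 2 < 1 := by linarith [sq_nonneg lamk]
  have hAk1' :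
      Ak1 = (1 - lamk ^ 2 - M * etak ^ 2) / ((1 - M * etak ^ 2) * (1 - lamk) ^ 2) * Ak := by
    have : 1 - lamk ≠ 0 := by linarith
    have : 1 - M * etak ^ 2 ≠ 0 := by linarith
    rw [hA1, heta, hB, hA]
    field_simp
  have hstep := inner_halpern_step_le_of_monotone hmono hlam hlamk' hBk.le (u := uk) huk1
  rw [show Bk * etak / lamk = 2 * Ak by rw [hA]; field_simp, ← hB] at hstep
  have hgap : L ^ 2 * ((2 + θ) * Ak / (M * etak ^ 2)) * ‖uk1 - vk‖ ^ 2
      = Ak / 3 * ‖gk - gkm1‖ ^ 2 := by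
    rw [show uk1 - vk = etak • (gkm1 - gk) by rw [huk1, hvk]; module, norm_smul, norm_sub_rev,
      Real.norm_eq_abs, mul_pow, sq_abs, hM]
    field_simp
  linear_combination hstep + ‖F uk1‖ ^ 2 * hAk1'
    + Ak * quadratic_le_norm_sub_sq_div hm0 hm1 hlamk' (F uk1) gk
    + Ak / (M * etak ^ 2) * norm_sub_sq_le_weighted one_pos (F uk1) (F vk) gk
    + Ak / 3 * norm_sub_sq_le_weighted two_pos gk (F uk) gkm1
    + Ak / 2 * norm_sub_sq_le_weighted one_pos (F uk) (F vkm1) gkm1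
    + 2 * Ak / (M * etak ^ 2) * pow_le_pow_left₀ (norm_nonneg _) (hlip uk1 vk) 2
    + Ak * pow_le_pow_left₀ (norm_nonneg _) (hlip uk vkm1) 2
    + hgap + Ak * norm_sub_sq_real gk (F uk) + 2 * Ak * real_inner_comm gk (F uk)

/-- One-step potential bound for the extrapolated (two-step) Halpern iteration
with a monotone `L`-Lipschitz operator and inexact operator values, using the potential
`V_k = A_k‖F(u_k)‖² + B_k⟪F(u_k), u_k − u_0⟫ + c_k L²‖u_k − v_{k-1}‖²`. -/
theorem extrapolated_halpern_potential_one_step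
    {d : ℕ} (L θ M : ℝ) (hL : 0 < L) (hθ : 0 < θ) (hM : M = 3 * L ^ 2 * (2 + θ))
    (F : EuclideanSpace ℝ (Fin d) → EuclideanSpace ℝ (Fin d))
    (hmono : ∀ u v, 0 ≤ ⟪F u - F v, u - v⟫)
    (hlip : ∀ u v, ‖F u - F v‖ ≤ L * ‖u - v‖)
    (lamk lamk1 etak etak1 Ak Ak1 Bk Bk1 ck ck1 : ℝ)
    (hlamk : 0 ≤ lamk) (hlamk' : lamk < 1)
    (hlamk1 : 0 ≤ lamk1) (hlamk1' : lamk1 < 1)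
    (hetak : 0 < etak) (hetak1 : 0 < etak1)
    (hAk : 0 < Ak) (hAk1 : 0 < Ak1) (hBk : 0 < Bk) (hBk1 : 0 < Bk1)
    (hck : 0 < ck) (hck1 : 0 < ck1)
    (hB : Bk1 = Bk / (1 - lamk))
    (hA : Ak = Bk * etak / (2 * lamk))
    (hA1 : Ak1 = Bk1 * etak1 / (2 * lamk1))
    (heta : etak1 = ((1 - lamk ^ 2 - M * etak ^ 2) * lamk1 * etak) /
        ((1 - M * etak ^ 2) * (1 - lamk) * lamk))
    (hsmall : M * etak ^ 2 + lamk ^ 2 < 1)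
    (hetale : etak1 ≤ lamk1 * (1 - lamk) / (M * lamk * etak))
    (u0 uk vkm1 gkm1 gk vk uk1 : EuclideanSpace ℝ (Fin d))
    (hvk : vk = lamk • u0 + (1 - lamk) • uk - etak • gkm1)
    (huk1 : uk1 = lamk • u0 + (1 - lamk) • uk - etak • gk) :
    (Ak1 * ‖F uk1‖ ^ 2 + Bk1 * ⟪F uk1, uk1 - u0⟫ + ck1 * L ^ 2 * ‖uk1 - vk‖ ^ 2)
        - (Ak * ‖F uk‖ ^ 2 + Bk * ⟪F uk, uk - u0⟫ + ck * L ^ 2 * ‖uk - vkm1‖ ^ 2)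
      ≤ - (L ^ 2 * (θ * Ak / (M * etak ^ 2) - ck1)) * ‖uk1 - vk‖ ^ 2
        - (L ^ 2 * (ck - Ak)) * ‖uk - vkm1‖ ^ 2
        + (2 * Ak / (M * etak ^ 2)) * ‖F vk - gk‖ ^ 2
        + Ak * ‖F vkm1 - gkm1‖ ^ 2 :=
  extrapolated_halpern_potential_one_step_general L θ M hL hθ hM F hmono hlip lamk lamk1 etak etak1
    Ak Ak1 Bk Bk1 ck ck1 hlamk' hetak hAk hAk1 hBk hB hA hA1 heta hsmall u0 uk vkm1 gkm1 gk vk uk1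
    hvk huk1
end
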